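/- For n ≥ 5, the sequence c_i = 2i · binom(2n − 2i − 5, n − 2i − 2), defined for integers i ≥ 1 with n − 2i − 2 ≥ 0, is (weakly) decreasing in i. -/
import Mathlib

lemma aux_choose (a k : ℕ) (hk : 2 ≤ k) (ha : 2 * k + 1 ≤ a) :
    2 * Nat.choose (a - 2) (k - 2) ≤ Nat.choose a k := by
  obtain ⟨k', rfl⟩ : ∃ k', k = k' + 2 := ⟨k - 2, by omega⟩
  obtain ⟨a', rfl⟩ : ∃ a', a = a' + 2 := ⟨a - 2, by omega⟩
  simp only [Nat.add_sub_cancel]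
  have hmono : Nat.choose a' k' ≤ Nat.choose a' (k' + 1) :=
    Nat.choose_le_succ_of_lt_half_left (by omega)
  calc 2 * Nat.choose a' k' = Nat.choose a' k' + Nat.choose a' k' := by ring
    _ ≤ Nat.choose a' k' + Nat.choose a' (k' + 1) := by omega
    _ = Nat.choose (a' + 1) (k' + 1) := (Nat.choose_succ_succ a' k').symm
    _ ≤ Nat.choose (a' + 1) (k' + 1) + Nat.choose (a' + 1) (k' + 2) := Nat.le_add_right _ _
    _ = Nat.choose (a' + 2) (k' + 2) := rfl

/-- For `n ≥ 5`, the sequence `c_i = 2i · binom(2n − 2i − 5, n − 2i − 2)` is weakly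
decreasing in `i`, for `i ≥ 1` with `n − 2(i+1) − 2 ≥ 0`. -/
theorem degree_terms_decreasing (n : ℕ) (hn : 5 ≤ n) :
    ∀ i : ℕ, 1 ≤ i → 2 * (i + 1) + 2 ≤ n →
      2 * (i + 1) * Nat.choose (2 * n - 2 * (i + 1) - 5) (n - 2 * (i + 1) - 2) ≤
        2 * i * Nat.choose (2 * n - 2 * i - 5) (n - 2 * i - 2) := by
  intro i hi hle
  set a := 2 * n - 2 * i - 5 with hadef
  set k := n - 2 * i - 2 with hkdef
  have h1 : 2 * n - 2 * (i + 1) - 5 = a - 2 := by omega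
  have h2 : n - 2 * (i + 1) - 2 = k - 2 := by omega
  rw [h1, h2]
  have hk : 2 ≤ k := by omega
  have ha : 2 * k + 1 ≤ a := by omega
  calc 2 * (i + 1) * Nat.choose (a - 2) (k - 2)
      ≤ 2 * i * (2 * Nat.choose (a - 2) (k - 2)) := by nlinarith [Nat.choose_pos (show k - 2 ≤ a - 2 by omega)]
    _ ≤ 2 * i * Nat.choose a k := Nat.mul_le_mul_left _ (aux_choose a k hk ha)
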